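/- arXiv:1407.0532 — 5 statements merged into one kernel-verified Lean document; each statement's English description precedes it below -/
import Mathlib

section
/- Given real numbers θ_1, ..., θ_d, the additive subgroup of ℝ^d generated by the standard basis vectors e_1, ..., e_d together with the vector (θ_1, ..., θ_d) is dense in ℝ^d if and only if the numbers 1, θ_1, ..., θ_d are linearly independent over ℚ. -/
/-!
A subgroup `G` of a finite-dimensional real vector space is dense exactly when no nonzero linear
functional takes only integer values on `G`. For the nontrivial direction, let `H` be the closure
of `G`, a proper closed subgroup. If `H` is discrete, it is a lattice in its span: a coordinate
of a `ℤ`-basis of that lattice, or a functional killing the span when the span is proper, is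
integral on `H`. Otherwise the directions of ever shorter vectors of `H` accumulate, so `H`
contains a whole line, and we conclude by induction on the dimension in the quotient by that
line.

For the subgroup generated by `e₁, …, e_d` and `θ`, the functionals integral on the generators
are `x ↦ ∑ mₖ xₖ` with `m ∈ ℤ^d` and `∑ mₖ θₖ ∈ ℤ`, i.e. the integer relations between
`1, θ₁, …, θ_d`.
-/

open Filter Topology Module

lemma norm_floor_zsmul_sub_smul_le {E : Type*} [NormedAddCommGroup E] [NormedSpace ℝ E]
    (x : E) (t : ℝ) : ‖⌊t / ‖x‖⌋ • x - t • ‖x‖⁻¹ • x‖ ≤ ‖x‖ := by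
  have key : ⌊t / ‖x‖⌋ • x - t • ‖x‖⁻¹ • x = ((⌊t / ‖x‖⌋ : ℝ) - t / ‖x‖) • x := by
    rw [sub_smul, smul_smul, ← Int.cast_smul_eq_zsmul ℝ, div_eq_mul_inv]
  rw [key, norm_smul, Real.norm_eq_abs, abs_sub_comm, Int.self_sub_floor,
    abs_of_nonneg (Int.fract_nonneg _)]
  exact mul_le_of_le_one_left (norm_nonneg x) (Int.fract_lt_one _).le

theorem AddSubgroup.preimage_mkQ_image_eq {M : Type*} [AddCommGroup M] [Module ℝ M]
    (H : AddSubgroup M) (W : Submodule ℝ M) (hW : (W : Set M) ⊆ H) :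
    W.mkQ ⁻¹' (W.mkQ '' H) = H := by
  refine Set.Subset.antisymm ?_ (Set.subset_preimage_image _ _)
  rintro x ⟨y, hy, hyx⟩
  have : x - y ∈ W := (Submodule.Quotient.eq W).mp hyx.symm
  simpa using H.add_mem (hW this) hy

theorem AddSubgroup.closure_mapsTo_int {M F : Type*} [AddCommGroup M] [FunLike F M ℝ]
    [AddMonoidHomClass F M ℝ] (f : F) {S : Set M}
    (hf : Set.MapsTo f S (Set.range ((↑) : ℤ → ℝ))) :
    Set.MapsTo f (AddSubgroup.closure S) (Set.range ((↑) : ℤ → ℝ)) :=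
  (AddSubgroup.closure_le ((Int.castAddHom ℝ).range.comap (f : M →+ ℝ))).mpr hf

section FiniteDimensional

variable {E : Type*} [NormedAddCommGroup E] [NormedSpace ℝ E] [FiniteDimensional ℝ E]

theorem AddSubgroup.exists_forall_smul_mem_of_isClosed (H : AddSubgroup E)
    (hH : IsClosed (H : Set E)) (hsmall : ∀ ε > 0, ∃ x ∈ H, x ≠ 0 ∧ ‖x‖ < ε) :
    ∃ u : E, u ≠ 0 ∧ ∀ t : ℝ, t • u ∈ H := by
  choose x hxH hx0 hxε using fun n : ℕ => hsmall (1 / (n + 1)) Nat.one_div_pos_of_nat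
  have hx_lim : Tendsto (‖x ·‖) atTop (𝓝 0) :=
    squeeze_zero (fun _ => norm_nonneg _) (fun n => (hxε n).le)
      tendsto_one_div_add_atTop_nhds_zero_nat
  obtain ⟨u, hu, φ, hφ, hu_lim⟩ := (isCompact_sphere (0 : E) 1).tendsto_subseq
    (x := fun n => ‖x n‖⁻¹ • x n) fun n => by
      simp [norm_smul, inv_mul_cancel₀ (norm_ne_zero_iff.mpr (hx0 n))]
  refine ⟨u, ne_zero_of_mem_unit_sphere ⟨u, hu⟩, fun t => ?_⟩
  have h_err : Tendsto (fun n => ⌊t / ‖x (φ n)‖⌋ • x (φ n) - t • ‖x (φ n)‖⁻¹ • x (φ n))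
      atTop (𝓝 0) :=
    squeeze_zero_norm (fun n => norm_floor_zsmul_sub_smul_le (x (φ n)) t)
      (hx_lim.comp hφ.tendsto_atTop)
  have h_lim : Tendsto (fun n => ⌊t / ‖x (φ n)‖⌋ • x (φ n)) atTop (𝓝 (t • u)) := by
    simpa using h_err.add (hu_lim.const_smul t)
  exact hH.mem_of_tendsto h_lim (Eventually.of_forall fun n => H.zsmul_mem (hxH _) _)

theorem AddSubgroup.exists_linearMap_ne_zero_mapsTo_int_of_discrete [Nontrivial E]
    (H : AddSubgroup E) (hsep : ∃ ε > 0, ∀ x ∈ H, x ≠ 0 → ε ≤ ‖x‖) :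
    ∃ f : E →ₗ[ℝ] ℝ, f ≠ 0 ∧ Set.MapsTo f H (Set.range ((↑) : ℤ → ℝ)) := by
  by_cases hspan : Submodule.span ℝ (H : Set E) = ⊤
  swap
  · obtain ⟨f, hf0, hker⟩ := (Submodule.span ℝ (H : Set E)).exists_le_ker_of_lt_top
      (lt_top_iff_ne_top.mpr hspan)
    exact ⟨f, hf0, fun x hx => ⟨0, by rw [Int.cast_zero, hker (Submodule.subset_span hx)]⟩⟩
  obtain ⟨ε, hε, hsep⟩ := hsep
  let L : Submodule ℤ E := H.toIntSubmodule
  have : DiscreteTopology L := by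
    refine discreteTopology_of_isOpen_singleton_zero ?_
    convert (Metric.isOpen_ball (x := (0 : E)) (ε := ε)).preimage continuous_subtype_val
    ext ⟨x, hx⟩
    simp only [Set.mem_singleton_iff, Set.mem_preimage, mem_ball_zero_iff]
    refine ⟨fun h => by simp_all, fun h => by_contra fun h0 => ?_⟩
    exact (hsep x hx fun h' => h0 (Subtype.ext h')).not_gt h
  have : IsZLattice ℝ L := ⟨hspan⟩
  have : Module.Free ℤ L := ZLattice.module_free ℝ L
  have : Module.Finite ℤ L := ZLattice.module_finite ℝ L
  let b := Module.Free.chooseBasis ℤ L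
  obtain ⟨i⟩ : Nonempty (Module.Free.ChooseBasisIndex ℤ L) := by
    rw [← Fintype.card_pos_iff, ← finrank_eq_card_chooseBasisIndex, ZLattice.rank ℝ L]
    exact finrank_pos
  refine ⟨(b.ofZLatticeBasis ℝ L).coord i, fun h => by simpa using congr($h (b i)),
    fun x hx => ⟨b.repr ⟨x, hx⟩ i, ?_⟩⟩
  simp [b.ofZLatticeBasis_repr_apply ℝ L ⟨x, hx⟩ i]

theorem AddSubgroup.exists_linearMap_ne_zero_mapsTo_int (H : AddSubgroup E)
    (hH : IsClosed (H : Set E)) (hne : H ≠ ⊤) :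
    ∃ f : E →ₗ[ℝ] ℝ, f ≠ 0 ∧ Set.MapsTo f H (Set.range ((↑) : ℤ → ℝ)) := by
  induction hn : finrank ℝ E using Nat.strong_induction_on generalizing E with
  | _ n ih =>
  have : Nontrivial E := not_subsingleton_iff_nontrivial.mp fun _ =>
    hne (Subsingleton.elim _ _)
  by_cases hsep : ∃ ε > 0, ∀ x ∈ H, x ≠ 0 → ε ≤ ‖x‖
  · exact H.exists_linearMap_ne_zero_mapsTo_int_of_discrete hsep
  push Not at hsep
  obtain ⟨u, hu0, hu⟩ := H.exists_forall_smul_mem_of_isClosed hH hsep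
  let W := ℝ ∙ u
  have : IsClosed (W : Set E) := W.closed_of_finiteDimensional
  have hWH : (W : Set E) ⊆ H := fun x hx => by
    obtain ⟨t, rfl⟩ := Submodule.mem_span_singleton.mp hx
    exact hu t
  let H' := H.map W.mkQ.toAddMonoidHom
  have hpre : W.mkQ ⁻¹' H' = H := H.preimage_mkQ_image_eq W hWH
  have hH' : IsClosed (H' : Set (E ⧸ W)) := by
    rwa [← W.isQuotientMap_mkQ.isClosed_preimage, hpre]
  have hne' : H' ≠ ⊤ := fun h => hne <| by
    rw [← SetLike.coe_set_eq, ← hpre, h, AddSubgroup.coe_top, Set.preimage_univ,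
      AddSubgroup.coe_top]
  have hrank : finrank ℝ (E ⧸ W) < n := by
    have := W.finrank_quotient_add_finrank
    rw [finrank_span_singleton hu0] at this
    omega
  obtain ⟨g, hg0, hg⟩ := ih _ hrank H' hH' hne' rfl
  exact ⟨g ∘ₗ W.mkQ, fun h => hg0 ((LinearMap.cancel_right W.mkQ_surjective).mp h),
    fun x hx => hg ⟨x, hx, rfl⟩⟩

theorem AddSubgroup.dense_iff_forall_mapsTo_int (G : AddSubgroup E) :
    Dense (G : Set E) ↔ ∀ f : E →ₗ[ℝ] ℝ, Set.MapsTo f G (Set.range ((↑) : ℤ → ℝ)) → f = 0 := by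
  refine ⟨fun hG f hf => ?_, fun h => ?_⟩
  · by_contra hf0
    have hf_univ : Set.MapsTo f Set.univ (Set.range ((↑) : ℤ → ℝ)) := hG.closure_eq ▸
      hf.closure_left f.continuous_of_finiteDimensional
        Int.isClosedEmbedding_coe_real.isClosed_range
    obtain ⟨x, hx⟩ := LinearMap.surjective (f := (f : Dual ℝ E)) hf0 (1 / 2)
    obtain ⟨m, hm⟩ := hf_univ (Set.mem_univ x)
    have : ((2 * m : ℤ) : ℝ) = (1 : ℤ) := by push_cast; rw [hm, hx]; norm_num
    have := Int.cast_injective this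
    omega
  · by_contra hG
    have hne : G.topologicalClosure ≠ ⊤ := fun h' =>
      hG (dense_iff_closure_eq.mpr congr(($h' : Set E)))
    obtain ⟨f, hf0, hf⟩ :=
      G.topologicalClosure.exists_linearMap_ne_zero_mapsTo_int G.isClosed_topologicalClosure hne
    exact hf0 (h f (hf.mono_left G.le_topologicalClosure))

end FiniteDimensional

theorem linearIndependent_fin_cons_one_iff {d : ℕ} (θ : Fin d → ℝ) :
    LinearIndependent ℚ (Fin.cons 1 θ : Fin (d + 1) → ℝ) ↔
      ∀ (m : Fin d → ℤ) (n : ℤ), ∑ i, (m i : ℝ) * θ i = n → m = 0 := by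
  rw [← LinearIndependent.iff_fractionRing ℤ ℚ, Fintype.linearIndependent_iff]
  simp only [Fin.sum_univ_succ, Fin.cons_zero, Fin.cons_succ, zsmul_eq_mul, mul_one]
  refine ⟨fun h m n hmn => funext fun i => ?_, fun h g hg => ?_⟩
  · simpa using h (Fin.cons (-n) m) (by simp [hmn]) i.succ
  · have hm : ∀ i : Fin d, g i.succ = 0 :=
      congrFun (h (fun i : Fin d => g i.succ) (-g 0) (by push_cast; linarith))
    have h0 : g 0 = 0 := by simpa [hm] using hg
    exact Fin.cases h0 hm

theorem dense_iff_linearIndependent (d : ℕ) (θ : Fin d → ℝ) :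
    Dense ((AddSubgroup.closure
        (Set.range (fun k : Fin d => (Pi.single k 1 : Fin d → ℝ)) ∪ {θ}) :
        AddSubgroup (Fin d → ℝ)) : Set (Fin d → ℝ)) ↔
      LinearIndependent ℚ (Fin.cons 1 θ : Fin (d + 1) → ℝ) := by
  rw [AddSubgroup.dense_iff_forall_mapsTo_int, linearIndependent_fin_cons_one_iff]
  constructor
  · intro h m n hmn
    let f := Fintype.linearCombination ℝ (fun i => (m i : ℝ))
    have hf : f = 0 := h f <| AddSubgroup.closure_mapsTo_int f <| by
      rintro x (⟨k, rfl⟩ | rfl)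
      · exact ⟨m k, by simp [f]⟩
      · exact ⟨n, by simpa [f, Fintype.linearCombination_apply, mul_comm] using hmn.symm⟩
    ext i
    simpa [f] using congr($hf (Pi.single i 1))
  · intro h f hf
    choose m hm using fun k => hf (AddSubgroup.subset_closure (Or.inl ⟨k, rfl⟩))
    obtain ⟨n, hn⟩ := hf (AddSubgroup.subset_closure (Or.inr rfl))
    have hθ : f θ = ∑ k, (m k : ℝ) * θ k := by
      conv_lhs => rw [pi_eq_sum_univ' θ]
      simp [hm, mul_comm]
    have hm0 := h m n (hθ.symm.trans hn.symm)
    refine LinearMap.pi_ext' fun k => LinearMap.ext_ring ?_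
    simp [← hm, hm0]
end

section
/- Let G be an abelian group, f : G → ℂ, and h_1, ..., h_s ∈ G such that Δ_{h_k}^{m+1} f(x) = 0 for all x ∈ G and k = 1, ..., s. Then Δ_h^{sm+1} f(x) = 0 for every x ∈ G and every h in the subgroup H = h_1 ℤ + ... + h_s ℤ generated by h_1, ..., h_s. -/
/-!
Functions `G → E` carry an action of the group ring `ℤ[G]` in which `[v] - 1` acts as `Δ_v`,
so the elements of `ℤ[G]` killing `f` form an ideal `I`. Since `ℤ[G]` is commutative and
`[a + b] - 1 = [a]([b] - 1) + ([a] - 1)`, the binomial theorem gives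
`([a + b] - 1)^(p + q + 1) ∈ I` from `([a] - 1)^(p + 1) ∈ I` and `([b] - 1)^(q + 1) ∈ I`.
Moreover `[v] - 1` divides `[c v] - 1` for every `c ∈ ℤ`, so induction on the number of
generators in `v = c₁ h₁ + ⋯ + cₛ hₛ` gives `([v] - 1)^(s m + 1) ∈ I`.
-/

open AddMonoidAlgebra fwdDiff fwdDiff_aux Finset

noncomputable section

namespace Montel

section GroupRing

variable {k G : Type*} [CommRing k] [AddCommGroup G]

def delta (v : G) : k[G] := single v 1 - 1

lemma delta_zero : (delta 0 : k[G]) = 0 := by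
  rw [delta, ← one_def, sub_self]

lemma delta_add (a b : G) : (delta (a + b) : k[G]) = single a 1 * delta b + delta a := by
  rw [delta, delta, delta, mul_sub, single_mul_single, one_mul, mul_one]
  abel

lemma delta_dvd_delta_nsmul (a : G) (n : ℕ) : (delta a : k[G]) ∣ delta (n • a) := by
  simpa [delta] using sub_dvd_pow_sub_pow (single a (1 : k)) 1 n

lemma delta_dvd_delta_neg (a : G) : (delta a : k[G]) ∣ delta (-a) := by
  refine Dvd.intro_left (-single (-a) 1) ?_
  rw [delta, delta, neg_mul, mul_sub, single_mul_single, neg_add_cancel, one_mul, mul_one,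
    ← one_def]
  abel

lemma delta_dvd_delta_zsmul (a : G) (c : ℤ) : (delta a : k[G]) ∣ delta (c • a) := by
  obtain ⟨n, rfl | rfl⟩ := c.eq_nat_or_neg
  · rw [natCast_zsmul]
    exact delta_dvd_delta_nsmul a n
  · rw [neg_zsmul, natCast_zsmul]
    exact (delta_dvd_delta_nsmul a n).trans (delta_dvd_delta_neg _)

variable {I : Ideal k[G]}

lemma delta_add_pow_mem {a b : G} {p q : ℕ} (ha : delta a ^ (p + 1) ∈ I)
    (hb : delta b ^ (q + 1) ∈ I) : delta (a + b) ^ (p + q + 1) ∈ I := by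
  rw [delta_add]
  refine I.add_pow_mem_of_pow_mem_of_le ?_ ha (by omega : q + 1 + (p + 1) ≤ p + q + 1 + 1)
  rw [mul_pow]
  exact I.mul_mem_left _ hb

lemma delta_sum_pow_mem {ι : Type*} (t : Finset ι) (w : ι → G) {m : ℕ}
    (hw : ∀ i ∈ t, delta (w i) ^ (m + 1) ∈ I) : delta (∑ i ∈ t, w i) ^ (#t * m + 1) ∈ I := by
  classical
  induction t using Finset.induction_on with
  | empty => simp [delta_zero]
  | insert a t ha ih =>
    rw [sum_insert ha, card_insert_of_notMem ha, add_one_mul, add_comm _ m]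
    exact delta_add_pow_mem (hw a (mem_insert_self a t))
      (ih fun i hi => hw i (mem_insert_of_mem hi))

lemma delta_pow_mem_of_mem_closure {ι : Type*} [Fintype ι] {h : ι → G} {m : ℕ}
    (hh : ∀ i, delta (h i) ^ (m + 1) ∈ I) {v : G} (hv : v ∈ AddSubgroup.closure (Set.range h)) :
    delta v ^ (Fintype.card ι * m + 1) ∈ I := by
  rw [← Submodule.span_int_eq_addSubgroupClosure, Submodule.mem_toAddSubgroup,
    Submodule.mem_span_range_iff_exists_fun] at hv
  obtain ⟨c, rfl⟩ := hv
  exact delta_sum_pow_mem univ _ fun i _ =>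
    I.mem_of_dvd (pow_dvd_pow_of_dvd (delta_dvd_delta_zsmul _ _) _) (hh i)

end GroupRing

section Action

variable {G E : Type*} [AddCommGroup G] [AddCommGroup E]

variable (E) in
def shiftHom : Multiplicative G →* Module.End ℤ (G → E) where
  toFun v := shiftₗ G E v.toAdd
  map_one' := by ext; simp [shiftₗ_apply]
  map_mul' a b := by ext; simp [shiftₗ_apply, add_assoc]

variable (E) in
def shiftAlgHom : ℤ[G] →ₐ[ℤ] Module.End ℤ (G → E) := lift ℤ _ G (shiftHom E)

lemma shiftAlgHom_delta (v : G) : shiftAlgHom E (delta v) = fwdDiffₗ G E v := by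
  rw [delta, map_sub, map_one, shiftAlgHom, lift_single, one_smul]
  ext
  simp [shiftHom, shiftₗ_apply, fwdDiff]

def annihilator (f : G → E) : Ideal ℤ[G] :=
  Ideal.comap (shiftAlgHom E) (Ideal.torsionOf (Module.End ℤ (G → E)) (G → E) f)

lemma mem_annihilator {f : G → E} {u : ℤ[G]} : u ∈ annihilator f ↔ shiftAlgHom E u f = 0 :=
  Iff.rfl

lemma delta_pow_mem_annihilator_iff {R : Type*} [CommRing R] (f : G → R) (v : G) (n : ℕ) :
    delta v ^ n ∈ annihilator f ↔
      ∀ x, ∑ j ∈ range (n + 1), (n.choose j : R) * (-1) ^ (n - j) * f (x + j • v) = 0 := by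
  rw [mem_annihilator, map_pow, shiftAlgHom_delta, coe_fwdDiffₗ_pow, funext_iff]
  refine forall_congr' fun x => ?_
  rw [fwdDiff_iter_eq_sum_shift, Pi.zero_apply]
  push_cast [zsmul_eq_mul, mul_comm ((-1 : R) ^ _)]
  rfl

end Action

end Montel

end

open Montel in
theorem montel_group_version
    {G : Type*} [AddCommGroup G] (m s : ℕ) (f : G → ℂ) (h : Fin s → G)
    (hf : ∀ k : Fin s, ∀ x : G,
      ∑ j ∈ Finset.range (m + 2),
        ((m + 1).choose j : ℂ) * (-1) ^ (m + 1 - j) * f (x + j • h k) = 0) :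
    ∀ x : G, ∀ v ∈ AddSubgroup.closure (Set.range h),
      ∑ j ∈ Finset.range (s * m + 2),
        ((s * m + 1).choose j : ℂ) * (-1) ^ (s * m + 1 - j) * f (x + j • v) = 0 := by
  intro x v hv
  have hgen : ∀ k, delta (h k) ^ (m + 1) ∈ annihilator f := fun k =>
    (delta_pow_mem_annihilator_iff f (h k) (m + 1)).2 (hf k)
  have hpow := delta_pow_mem_of_mem_closure hgen hv
  rw [Fintype.card_fin, delta_pow_mem_annihilator_iff] at hpow
  exact hpow x
end

section
/- Let f : ℝ^d → ℂ be continuous and h_1, ..., h_s ∈ ℝ^d be such that the subgroup H = h_1 ℤ + ... + h_s ℤ is dense in ℝ^d. If Δ_{h_k}^{m+1} f(x) = 0 for all x ∈ ℝ^d and all k = 1, ..., s, then Δ_h^{sm+1} f(x) = 0 for all x, h ∈ ℝ^d. -/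
/-!
Write `τ_u` for translation by `u` and `Δ_u = τ_u - 1`; all these operators commute. From
`Δ_{u+w} = τ_w Δ_u + Δ_w` and the binomial theorem, if `Δ_u^{a+1} f = 0` and `Δ_w^{b+1} f = 0` then
`Δ_{u+w}^{a+b+1} f = 0`, and `Δ_{zu}` is a multiple of `Δ_u` by an operator commuting with it. So
every element of `H` kills `f` with order `sm + 1`. Finally `u ↦ Δ_u^{sm+1} f x` is continuous and
vanishes on the dense set `H`, hence everywhere.
-/

open Finset fwdDiff fwdDiff_aux

section

variable {G E : Type*} [AddCommGroup G] [AddCommGroup E]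

lemma fwdDiffₗ_commute (u w : G) : Commute (fwdDiffₗ G E u) (fwdDiffₗ G E w) :=
  LinearMap.ext fun f ↦ funext fun x ↦ by
    simp only [Module.End.mul_apply, fwdDiffₗ_apply, fwdDiff, add_right_comm x u w]
    abel

lemma shiftₗ_commute_fwdDiffₗ (u w : G) : Commute (shiftₗ G E u) (fwdDiffₗ G E w) :=
  (fwdDiffₗ_commute u w).add_left (Commute.one_left _)

lemma shiftₗ_nsmul (u : G) (n : ℕ) : shiftₗ G E (n • u) = shiftₗ G E u ^ n :=
  LinearMap.ext fun f ↦ funext fun x ↦ by rw [shiftₗ_pow_apply, shiftₗ_apply]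

lemma fwdDiffₗ_add (u w : G) :
    fwdDiffₗ G E (u + w) = shiftₗ G E w * fwdDiffₗ G E u + fwdDiffₗ G E w :=
  LinearMap.ext fun f ↦ funext fun x ↦ by
    simp only [LinearMap.add_apply, Module.End.mul_apply, Pi.add_apply, fwdDiffₗ_apply,
      shiftₗ_apply, fwdDiff, add_assoc, add_comm w u]
    abel

lemma fwdDiffₗ_nsmul (u : G) (n : ℕ) :
    fwdDiffₗ G E (n • u) = (∑ i ∈ range n, shiftₗ G E u ^ i) * fwdDiffₗ G E u := by
  have hshift (v : G) : fwdDiffₗ G E v = shiftₗ G E v - 1 := (add_sub_cancel_right _ _).symm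
  rw [hshift, hshift, shiftₗ_nsmul, geom_sum_mul]

lemma fwdDiffₗ_neg (u : G) : fwdDiffₗ G E (-u) = -shiftₗ G E (-u) * fwdDiffₗ G E u :=
  LinearMap.ext fun f ↦ funext fun x ↦ by
    simp only [LinearMap.neg_apply, Module.End.mul_apply, Pi.neg_apply, fwdDiffₗ_apply,
      shiftₗ_apply, fwdDiff, neg_add_cancel_right]
    abel

variable {f : G → E}

/-- The endomorphisms killing `f` form a left ideal; vanishing of differences becomes membership. -/
lemma fwdDiff_iter_eq_zero_iff_mem_ker (u : G) (n : ℕ) :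
    Δ_[u] ^[n] f = 0 ↔
      fwdDiffₗ G E u ^ n ∈ LinearMap.ker (LinearMap.toSpanSingleton (Module.End ℤ (G → E)) _ f) := by
  simp [← coe_fwdDiffₗ_pow]

lemma fwdDiff_iter_eq_zero_of_fwdDiffₗ_eq_mul {u v : G} {n : ℕ} {P : Module.End ℤ (G → E)}
    (hP : Commute P (fwdDiffₗ G E u)) (hv : fwdDiffₗ G E v = P * fwdDiffₗ G E u)
    (hu : Δ_[u] ^[n] f = 0) : Δ_[v] ^[n] f = 0 := by
  rw [fwdDiff_iter_eq_zero_iff_mem_ker] at hu ⊢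
  rw [hv, hP.mul_pow]
  exact Ideal.mul_mem_left _ _ hu

lemma fwdDiff_iter_nsmul_eq_zero {u : G} {n : ℕ} (hu : Δ_[u] ^[n] f = 0) (k : ℕ) :
    Δ_[k • u] ^[n] f = 0 :=
  fwdDiff_iter_eq_zero_of_fwdDiffₗ_eq_mul
    (Commute.sum_left _ _ _ fun i _ ↦ (shiftₗ_commute_fwdDiffₗ u u).pow_left i)
    (fwdDiffₗ_nsmul u k) hu

lemma fwdDiff_iter_neg_eq_zero {u : G} {n : ℕ} (hu : Δ_[u] ^[n] f = 0) : Δ_[-u] ^[n] f = 0 :=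
  fwdDiff_iter_eq_zero_of_fwdDiffₗ_eq_mul (shiftₗ_commute_fwdDiffₗ (-u) u).neg_left
    (fwdDiffₗ_neg u) hu

lemma fwdDiff_iter_zsmul_eq_zero {u : G} {n : ℕ} (hu : Δ_[u] ^[n] f = 0) (z : ℤ) :
    Δ_[z • u] ^[n] f = 0 := by
  rcases z with k | k
  · simpa using fwdDiff_iter_nsmul_eq_zero hu k
  · simpa [negSucc_zsmul] using fwdDiff_iter_neg_eq_zero (fwdDiff_iter_nsmul_eq_zero hu (k + 1))

lemma fwdDiff_iter_add_eq_zero {u w : G} {a b : ℕ} (hu : Δ_[u] ^[a + 1] f = 0)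
    (hw : Δ_[w] ^[b + 1] f = 0) : Δ_[u + w] ^[a + b + 1] f = 0 := by
  rw [fwdDiff_iter_eq_zero_iff_mem_ker] at hu hw ⊢
  rw [fwdDiffₗ_add]
  refine Ideal.add_pow_mem_of_pow_mem_of_le_of_commute (m := a + 1) _ ?_ hw (by omega)
    ((shiftₗ_commute_fwdDiffₗ w w).mul_left (fwdDiffₗ_commute u w))
  rw [(shiftₗ_commute_fwdDiffₗ w u).mul_pow]
  exact Ideal.mul_mem_left _ _ hu

lemma fwdDiff_iter_eq_zero_of_mem_closure {ι : Type*} [Fintype ι] {h : ι → G} {m : ℕ}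
    (hf : ∀ k, Δ_[h k] ^[m + 1] f = 0) {u : G} (hu : u ∈ AddSubgroup.closure (Set.range h)) :
    Δ_[u] ^[Fintype.card ι * m + 1] f = 0 := by
  classical
  obtain ⟨c, rfl⟩ := AddSubgroup.exists_of_mem_closure_range h u hu
  suffices ∀ t : Finset ι, Δ_[∑ k ∈ t, c k • h k] ^[#t * m + 1] f = 0 from this univ
  intro t
  induction t using Finset.induction_on with
  | empty => ext x; simp [fwdDiff]
  | insert a t ha ih =>
    rw [sum_insert ha, card_insert_of_notMem ha, add_one_mul, add_comm (#t * m)]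
    exact fwdDiff_iter_add_eq_zero (fwdDiff_iter_zsmul_eq_zero (hf a) _) ih

end

lemma fwdDiff_iter_eq_sum_mul {G R : Type*} [AddCommMonoid G] [Ring R] (f : G → R) (u : G)
    (n : ℕ) (x : G) :
    Δ_[u] ^[n] f x = ∑ k ∈ range (n + 1), (n.choose k : R) * (-1) ^ (n - k) * f (x + k • u) := by
  rw [fwdDiff_iter_eq_sum_shift]
  refine sum_congr rfl fun k _ ↦ ?_
  push_cast [zsmul_eq_mul]
  rw [((Commute.neg_one_left (n.choose k : R)).pow_left (n - k)).eq]

lemma continuous_fwdDiff_iter_apply {G E : Type*} [AddCommMonoid G] [TopologicalSpace G]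
    [ContinuousAdd G] [AddCommGroup E] [TopologicalSpace E] [IsTopologicalAddGroup E]
    {f : G → E} (hf : Continuous f) (n : ℕ) (x : G) :
    Continuous fun u ↦ Δ_[u] ^[n] f x := by
  simp only [fwdDiff_iter_eq_sum_shift]
  fun_prop

lemma fwdDiff_iter_eq_zero_of_dense {G E : Type*} [AddCommMonoid G] [TopologicalSpace G]
    [ContinuousAdd G] [AddCommGroup E] [TopologicalSpace E] [IsTopologicalAddGroup E] [T2Space E]
    {f : G → E} (hf : Continuous f) {n : ℕ} {S : Set G} (hS : Dense S)
    (hfS : ∀ u ∈ S, Δ_[u] ^[n] f = 0) (v : G) : Δ_[v] ^[n] f = 0 := by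
  ext x
  have : (fun u ↦ Δ_[u] ^[n] f x) = fun _ ↦ 0 :=
    (continuous_fwdDiff_iter_apply hf n x).ext_on hS continuous_const
      fun u hu ↦ congr_fun (hfS u hu) x
  exact congr_fun this v

theorem montel_dense_subgroup (d m s : ℕ) (f : (Fin d → ℝ) → ℂ)
    (hcont : Continuous f) (h : Fin s → (Fin d → ℝ))
    (hdense : Dense ((AddSubgroup.closure (Set.range h) : AddSubgroup (Fin d → ℝ)) :
      Set (Fin d → ℝ)))
    (hf : ∀ k : Fin s, ∀ x : Fin d → ℝ,
      ∑ j ∈ Finset.range (m + 2),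
        ((m + 1).choose j : ℂ) * (-1) ^ (m + 1 - j) * f (x + j • h k) = 0) :
    ∀ x v : Fin d → ℝ,
      ∑ j ∈ Finset.range (s * m + 2),
        ((s * m + 1).choose j : ℂ) * (-1) ^ (s * m + 1 - j) * f (x + j • v) = 0 := by
  have hgen (k : Fin s) : Δ_[h k] ^[m + 1] f = 0 := by
    ext x
    simpa [fwdDiff_iter_eq_sum_mul] using hf k x
  have hsub (u : Fin d → ℝ) (hu : u ∈ AddSubgroup.closure (Set.range h)) :
      Δ_[u] ^[s * m + 1] f = 0 := by
    simpa using fwdDiff_iter_eq_zero_of_mem_closure hgen hu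
  intro x v
  simpa [fwdDiff_iter_eq_sum_mul] using
    congr_fun (fwdDiff_iter_eq_zero_of_dense hcont hdense hsub v) x
end

section
/- Let h_1, h_2 be nonzero real numbers with h_1/h_2 irrational, and let f : ℝ → ℝ be continuous. Then f is a polynomial of degree at most m if and only if Δ_{h_1}^{m+1} f(x) = 0 and Δ_{h_2}^{m+1} f(x) = 0 for all x ∈ ℝ. -/
/-!
If `Δ_h^[m+1] f = 0` then `Δ_h^[m] f` is `h`-periodic, and since `Δ_h^[m] (x ^ m) = m! h^m`,
peeling off `Δ_h^[m] f x / (m! h^m) * x ^ m` inductively writes `f x = ∑_{k ≤ m} a_k(x) x^k`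
with continuous `h`-periodic, hence bounded, coefficients. Doing this for `h₁` and for `h₂`
gives two such expansions of `f`. Their top coefficients differ by `O(1/x)` at `+∞`, so
`a_m(· + h₂) - a_m` is an `h₁`-periodic function tending to `0`, i.e. zero. Thus `a_m` is
continuous with the periods `h₁, h₂`, which generate a dense subgroup of `ℝ`: it is constant,
and equals `c_m`. Descending induction makes every coefficient constant.
-/

open Finset Function Polynomial Nat Filter Topology Asymptotics
open scoped fwdDiff

theorem fwdDiff_iter_sub {M G : Type*} [AddCommMonoid M] [AddCommGroup G] (h : M) (f g : M → G)
    (n : ℕ) : (Δ_[h])^[n] (f - g) = (Δ_[h])^[n] f - (Δ_[h])^[n] g := by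
  simpa only [fwdDiff_aux.coe_fwdDiffₗ_pow] using map_sub (fwdDiff_aux.fwdDiffₗ M G h ^ n) f g

theorem Continuous.fwdDiff_iter {M G : Type*} [TopologicalSpace M] [AddCommMonoid M]
    [ContinuousAdd M] [TopologicalSpace G] [AddCommGroup G] [IsTopologicalAddGroup G] {f : M → G}
    (hf : Continuous f) (h : M) (n : ℕ) : Continuous ((Δ_[h])^[n] f) := by
  induction n with
  | zero => exact hf
  | succ n ih =>
    rw [iterate_succ_apply']
    exact (ih.comp (continuous_add_const h)).sub ih

theorem Function.Periodic.fwdDiff_iter_mul {M R : Type*} [AddCommMonoid M] [Ring R] {c : M → R}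
    {h : M} (hc : Periodic c h) (u : M → R) (n : ℕ) :
    (Δ_[h])^[n] (c * u) = c * (Δ_[h])^[n] u := by
  induction n generalizing u with
  | zero => rfl
  | succ n ih =>
    have hstep : Δ_[h] (c * u) = c * Δ_[h] u := by
      funext y
      simp [fwdDiff, hc y, mul_sub]
    rw [iterate_succ_apply, hstep, ih, iterate_succ_apply]

section CommRing

variable {R : Type*} [CommRing R]

theorem fwdDiff_iter_apply_eq_fwdDiff_one_iter {G : Type*} [AddCommGroup G] (h : R) (f : R → G)
    (n : ℕ) (x : R) : (Δ_[h])^[n] f x = (Δ_[1])^[n] (fun t => f (x + t * h)) 0 := by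
  simp [fwdDiff_iter_eq_sum_shift]

theorem fwdDiff_iter_eq_sum_choose_mul (h : R) (f : R → R) (n : ℕ) (x : R) :
    (Δ_[h])^[n] f x =
      ∑ k ∈ range (n + 1), (n.choose k : R) * (-1) ^ (n - k) * f (x + k * h) := by
  rw [fwdDiff_iter_eq_sum_shift]
  refine sum_congr rfl fun k _ => ?_
  simp only [zsmul_eq_mul, nsmul_eq_mul, Int.cast_mul, Int.cast_pow, Int.cast_neg, Int.cast_one,
    Int.cast_natCast]
  ring

theorem Polynomial.fwdDiff_iter_eval_eq_zero_of_natDegree_lt {p : R[X]} {n : ℕ}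
    (hp : p.natDegree < n) (h : R) :
    (Δ_[h])^[n] (fun x => p.eval x) = 0 := by
  funext x
  have hcomp : (p.comp (C h * X + C x)).natDegree < n :=
    natDegree_comp_le.trans_lt <| (Nat.mul_le_mul_left _ natDegree_linear_le).trans_lt <| by
      rwa [mul_one]
  have hfun : (fun t => p.eval (x + t * h)) = fun t => (p.comp (C h * X + C x)).eval t := by
    funext t
    rw [eval_comp, eval_add, eval_mul, eval_C, eval_X, eval_C, add_comm, mul_comm h]
  rw [fwdDiff_iter_apply_eq_fwdDiff_one_iter, hfun, fwdDiff_iter_eq_zero_of_degree_lt hcomp]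
  rfl

theorem fwdDiff_iter_pow_eq_factorial_mul_pow (h x : R) (n : ℕ) :
    (Δ_[h])^[n] (fun y => y ^ n) x = n ! * h ^ n := by
  have hexpand : (fun t : R => (x + t * h) ^ n) = h ^ n • (fun t => t ^ n) +
      fun t => ∑ k ∈ range n, (h ^ k * x ^ (n - k) * n.choose k) * t ^ k := by
    funext t
    simp only [add_comm x, add_pow, sum_range_succ, Nat.sub_self, pow_zero, Nat.choose_self,
      Nat.cast_one, mul_one, Pi.add_apply, Pi.smul_apply, smul_eq_mul, mul_pow]
    rw [add_comm]
    congr 1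
    · ring
    · exact sum_congr rfl fun k _ => by ring
  rw [fwdDiff_iter_apply_eq_fwdDiff_one_iter, hexpand, fwdDiff_iter_add, fwdDiff_iter_const_smul,
    fwdDiff_iter_eq_factorial, fwdDiff_iter_sum_mul_pow_eq_zero]
  simp [mul_comm]

end CommRing

theorem exists_periodic_coeffs_of_fwdDiff_iter_eq_zero {h : ℝ} (hh : h ≠ 0) (m : ℕ)
    {f : ℝ → ℝ} (hf : Continuous f) (hΔ : (Δ_[h])^[m + 1] f = 0) :
    ∃ a : ℕ → ℝ → ℝ, (∀ k, Continuous (a k) ∧ Periodic (a k) h) ∧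
      ∀ x, f x = ∑ k ∈ range (m + 1), a k x * x ^ k := by
  induction m generalizing f with
  | zero =>
    refine ⟨fun _ => f, fun _ => ⟨hf, fun x => ?_⟩, fun x => by simp⟩
    exact sub_eq_zero.mp (congr_fun hΔ x)
  | succ m ih =>
    set K : ℝ := (m + 1)! * h ^ (m + 1)
    set c : ℝ → ℝ := fun x => (Δ_[h])^[m + 1] f x / K
    have hc : Continuous c ∧ Periodic c h := by
      refine ⟨(hf.fwdDiff_iter h (m + 1)).div_const K, fun x => ?_⟩
      rw [iterate_succ_apply'] at hΔ
      simp only [c, sub_eq_zero.mp (congr_fun hΔ x)]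
    have hg : (Δ_[h])^[m + 1] (f - c * fun x => x ^ (m + 1)) = 0 := by
      funext x
      have hK : K ≠ 0 := by positivity
      rw [fwdDiff_iter_sub, hc.2.fwdDiff_iter_mul, Pi.sub_apply, Pi.mul_apply,
        fwdDiff_iter_pow_eq_factorial_mul_pow]
      simp [c, K, hK]
    obtain ⟨a, ha, hfa⟩ := ih (hf.sub (hc.1.mul (continuous_pow _))) hg
    refine ⟨update a (m + 1) c, fun k => ?_, fun x => ?_⟩
    · rcases eq_or_ne k (m + 1) with rfl | hk
      · simpa using hc
      · simpa [hk] using ha k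
    · rw [sum_range_succ, update_self, sum_congr rfl fun k hk =>
        by rw [update_of_ne (mem_range.mp hk).ne], ← hfa x]
      simp

theorem Function.Periodic.isBigO_one {F : Type*} [NormedAddCommGroup F] {a : ℝ → F} {h : ℝ}
    (ha : Periodic a h) (hh : h ≠ 0) (hcont : Continuous a) (l : Filter ℝ) :
    a =O[l] (fun _ => (1 : ℝ)) := by
  obtain ⟨C, hC⟩ := isBounded_iff_forall_norm_le.mp (ha.isBounded_of_continuous hh hcont)
  exact isBigO_of_le' l fun x => by simpa using hC _ (Set.mem_range_self x)

theorem isLittleO_sum_mul_pow_atTop {n : ℕ} {b : ℕ → ℝ → ℝ}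
    (hb : ∀ k, b k =O[atTop] (fun _ => (1 : ℝ))) :
    (fun x => ∑ k ∈ range n, b k x * x ^ k) =o[atTop] (fun x => x ^ n) :=
  IsLittleO.fun_sum fun k hk => by
    simpa using (hb k).mul_isLittleO (isLittleO_pow_pow_atTop_of_lt (mem_range.mp hk))

theorem tendsto_zero_of_mul_pow_isLittleO {e : ℝ → ℝ} {n : ℕ}
    (he : (fun x => e x * x ^ n) =o[atTop] (fun x => x ^ n)) : Tendsto e atTop (𝓝 0) := by
  refine he.tendsto_div_nhds_zero.congr' ?_
  filter_upwards [eventually_gt_atTop 0] with x hx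
  field_simp

theorem Function.Periodic.eq_of_tendsto_atTop {α : Type*} [TopologicalSpace α] [T2Space α]
    {w : ℝ → α} {h : ℝ} (hw : Periodic w h) (hh : h ≠ 0) {L : α}
    (hlim : Tendsto w atTop (𝓝 L)) (x : ℝ) : w x = L := by
  wlog hpos : 0 < h generalizing h
  · exact this hw.neg (neg_ne_zero.mpr hh) (by linarith [hh.lt_or_gt.resolve_right hpos])
  have hseq : Tendsto (fun n : ℕ => x + n * h) atTop atTop :=
    tendsto_atTop_add_const_left _ x (tendsto_natCast_atTop_atTop.atTop_mul_const hpos)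
  have hconst : (fun n : ℕ => w (x + n * h)) = fun _ => w x := funext fun n => hw.nat_mul n x
  have hlim' := hlim.comp hseq
  rw [comp_def, hconst] at hlim'
  exact tendsto_nhds_unique tendsto_const_nhds hlim'

theorem Function.Periodic.eq_of_irrational_div {α : Type*} [TopologicalSpace α] [T2Space α]
    {v : ℝ → α} {h₁ h₂ : ℝ} (hv₁ : Periodic v h₁) (hv₂ : Periodic v h₂)
    (hirr : Irrational (h₁ / h₂)) (hv : Continuous v) (x : ℝ) : v x = v 0 := by
  have hperiods : ∀ t ∈ AddSubgroup.closure {h₁, h₂}, Periodic v t := fun t ht => by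
    induction ht using AddSubgroup.closure_induction with
    | mem t ht => rcases ht with rfl | rfl <;> assumption
    | zero => exact fun y => by rw [add_zero]
    | add s t _ _ hs ht => exact hs.add_period ht
    | neg t _ ht => exact ht.neg
  have hext : v = fun _ => v 0 :=
    Continuous.ext_on (dense_addSubgroupClosure_pair_iff.mpr hirr) hv continuous_const
      fun t ht => by simpa using hperiods t ht 0
  exact congr_fun hext x

theorem Function.Periodic.eq_const_of_tendsto_sub {a c : ℝ → ℝ} {h₁ h₂ : ℝ}
    (ha₁ : Periodic a h₁) (hc₂ : Periodic c h₂) (hh₁ : h₁ ≠ 0) (hh₂ : h₂ ≠ 0)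
    (hirr : Irrational (h₁ / h₂)) (ha : Continuous a) (hlim : Tendsto (a - c) atTop (𝓝 0))
    (x : ℝ) : a x = a 0 ∧ c x = a 0 := by
  have hw : Periodic (fun y => a (y + h₂) - a y) h₁ := fun y => by
    simp only [add_right_comm y h₁, ha₁ _]
  have hwlim : Tendsto (fun y => a (y + h₂) - a y) atTop (𝓝 0) := by
    have hdiff := (hlim.comp (tendsto_atTop_add_const_right _ h₂ tendsto_id)).sub hlim
    rw [sub_zero] at hdiff
    refine hdiff.congr fun y => ?_
    simp [hc₂ y]
  have ha₂ : Periodic a h₂ := fun y => sub_eq_zero.mp (hw.eq_of_tendsto_atTop hh₁ hwlim y)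
  have hconst := ha₁.eq_of_irrational_div ha₂ hirr ha
  have hclim : Tendsto (fun y => c y - a 0) atTop (𝓝 0) := by
    simpa [hconst] using hlim.neg
  have hcper : Periodic (fun y => c y - a 0) h₂ := fun y => by simp only [hc₂ y]
  exact ⟨hconst x, sub_eq_zero.mp (hcper.eq_of_tendsto_atTop hh₂ hclim x)⟩

theorem coeffs_const_of_sum_mul_pow_eq {h₁ h₂ : ℝ} (hh₁ : h₁ ≠ 0) (hh₂ : h₂ ≠ 0)
    (hirr : Irrational (h₁ / h₂)) {a c : ℕ → ℝ → ℝ}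
    (ha : ∀ k, Continuous (a k) ∧ Periodic (a k) h₁)
    (hc : ∀ k, Continuous (c k) ∧ Periodic (c k) h₂) (n : ℕ)
    (heq : ∀ x, ∑ k ∈ range n, a k x * x ^ k = ∑ k ∈ range n, c k x * x ^ k) :
    ∀ k < n, ∀ x, a k x = a k 0 := by
  induction n with
  | zero => simp
  | succ n ih =>
    have hlower : (fun x => ∑ k ∈ range n, (c k - a k) x * x ^ k) =o[atTop] (fun x => x ^ n) :=
      isLittleO_sum_mul_pow_atTop fun k =>
        ((hc k).2.isBigO_one hh₂ (hc k).1 _).sub ((ha k).2.isBigO_one hh₁ (ha k).1 _)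
    have hlim : Tendsto (a n - c n) atTop (𝓝 0) := by
      refine tendsto_zero_of_mul_pow_isLittleO (hlower.congr_left fun x => ?_)
      have := heq x
      simp only [sum_range_succ, Pi.sub_apply, sub_mul, sum_sub_distrib] at this ⊢
      linarith
    have htop := (ha n).2.eq_const_of_tendsto_sub (hc n).2 hh₁ hh₂ hirr (ha n).1 hlim
    have hlow := ih fun x => by
      have := heq x
      rw [sum_range_succ, sum_range_succ, (htop x).1, (htop x).2] at this
      linarith
    intro k hk
    rcases Nat.lt_succ_iff_lt_or_eq.mp hk with hk | rfl
    · exact hlow k hk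
    · exact fun x => (htop x).1

theorem montel_popoviciu_one_variable (m : ℕ)
    (h₁ h₂ : ℝ) (hh₁ : h₁ ≠ 0) (hh₂ : h₂ ≠ 0) (hirr : Irrational (h₁ / h₂))
    (f : ℝ → ℝ) (hcont : Continuous f) :
    (∃ p : Polynomial ℝ, p.degree ≤ m ∧ ∀ x : ℝ, f x = p.eval x) ↔
      (∀ x : ℝ,
        (∑ k ∈ Finset.range (m + 2),
          ((m + 1).choose k : ℝ) * (-1) ^ (m + 1 - k) * f (x + k * h₁) = 0) ∧
        (∑ k ∈ Finset.range (m + 2),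
          ((m + 1).choose k : ℝ) * (-1) ^ (m + 1 - k) * f (x + k * h₂) = 0)) := by
  have hΔ : ∀ h : ℝ, (∀ x : ℝ, ∑ k ∈ range (m + 2),
      ((m + 1).choose k : ℝ) * (-1) ^ (m + 1 - k) * f (x + k * h) = 0) ↔
      (Δ_[h])^[m + 1] f = 0 := fun h => by
    simp only [funext_iff, fwdDiff_iter_eq_sum_choose_mul, Pi.zero_apply]
  rw [forall_and, hΔ h₁, hΔ h₂]
  constructor
  · rintro ⟨p, hp, hfp⟩
    obtain rfl : f = fun x => p.eval x := funext hfp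
    have hdeg : p.natDegree < m + 1 := Nat.lt_succ_of_le (natDegree_le_iff_degree_le.mpr hp)
    exact ⟨p.fwdDiff_iter_eval_eq_zero_of_natDegree_lt hdeg h₁,
      p.fwdDiff_iter_eval_eq_zero_of_natDegree_lt hdeg h₂⟩
  · rintro ⟨hΔ₁, hΔ₂⟩
    obtain ⟨a, ha, hfa⟩ := exists_periodic_coeffs_of_fwdDiff_iter_eq_zero hh₁ m hcont hΔ₁
    obtain ⟨c, hc, hfc⟩ := exists_periodic_coeffs_of_fwdDiff_iter_eq_zero hh₂ m hcont hΔ₂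
    have hconst := coeffs_const_of_sum_mul_pow_eq hh₁ hh₂ hirr ha hc (m + 1)
      fun x => (hfa x).symm.trans (hfc x)
    refine ⟨∑ k ∈ range (m + 1), C (a k 0) * X ^ k, ?_, fun x => ?_⟩
    · refine (degree_sum_le _ _).trans (Finset.sup_le fun k hk => ?_)
      exact (degree_C_mul_X_pow_le k _).trans
        (by exact_mod_cast Nat.lt_succ_iff.mp (mem_range.mp hk))
    · rw [hfa x, eval_finsetSum]
      exact sum_congr rfl fun k hk => by simp [hconst k (mem_range.mp hk) x]
end

section
/- Let θ_1, ..., θ_{s−1} be nonzero reals and P a polynomial in s real variables of degree at most m in each variable. Suppose there is a set W ⊆ ℝ^{s−1} that is a correct interpolation set for polynomials of degree ≤ (s−1)m in each of s−1 variables, such that for every α = (α_1, ..., α_{s−1}) ∈ W there exists a sequence of vectors (u_{1,n}, ..., u_{s,n}) in ℝ^s with: (i) u_{j,n} + θ_j u_{s,n} → α_j for each j ≤ s−1; (ii) |u_{s,n}| → ∞; and (iii) the sequence P(u_{1,n}, ..., u_{s,n}) is bounded. Then there exists a polynomial A_0 in s−1 variables of degree at most (s−1)m in each variable such that P(t_1,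 ..., t_s) = A_0(t_1 + θ_1 t_s, ..., t_{s−1} + θ_{s−1} t_s) for all t. -/
open Filter

namespace CharAux

open MvPolynomial

noncomputable def fv (n : ℕ) (θ : Fin n → ℝ) : Fin (n+1) → MvPolynomial (Fin (n+1)) ℝ :=
  fun i => Fin.lastCases (X 0) (fun j' => X j'.succ - C (θ j') * X 0) i

theorem eval_aux (n : ℕ) (θ : Fin n → ℝ) (P : MvPolynomial (Fin (n+1)) ℝ)
    (t : Fin (n+1) → ℝ) :
    eval t P = eval (Fin.cons (t (Fin.last n))
      (fun j => t j.castSucc + θ j * t (Fin.last n)) : Fin (n+1) → ℝ)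
      (aeval (fv n θ) P) := by
  set y : Fin (n+1) → ℝ := Fin.cons (t (Fin.last n))
      (fun j => t j.castSucc + θ j * t (Fin.last n)) with hy
  have h1 : (eval y) (aeval (fv n θ) P) = eval (fun i => eval y (fv n θ i)) P := by
    have h2 := DFunLike.congr_fun
      (comp_aeval (f := fv n θ) (φ := (aeval y : MvPolynomial (Fin (n+1)) ℝ →ₐ[ℝ] ℝ))) P
    simpa [coe_aeval_eq_eval] using h2
  rw [h1]
  have h3 : (fun i => eval y (fv n θ i)) = t := by
    funext i
    refine Fin.lastCases ?_ (fun j => ?_) i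
    · simp [fv, hy]
    · simp [fv, hy, Fin.cons_succ]
  rw [h3]

theorem deg_aux (n : ℕ) (θ : Fin n → ℝ) (P : MvPolynomial (Fin (n+1)) ℝ) (j : Fin n) :
    degreeOf j.succ (aeval (fv n θ) P) ≤ degreeOf j.castSucc P := by
  have hdf : ∀ i, degreeOf j.succ (fv n θ i) ≤ if i = j.castSucc then 1 else 0 := by
    intro i
    refine Fin.lastCases ?_ (fun j' => ?_) i
    · have hne : (Fin.last n : Fin (n+1)) ≠ j.castSucc := (Fin.castSucc_lt_last j).ne'
      simp only [fv, Fin.lastCases_last, if_neg hne]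
      simp [MvPolynomial.degreeOf_X, (Fin.succ_ne_zero j)]
    · simp only [fv, Fin.lastCases_castSucc]
      refine le_trans (MvPolynomial.degreeOf_sub_le _ _ _) ?_
      have hC : degreeOf j.succ (C (θ j') * X (0 : Fin (n+1))) = 0 := by
        have := degreeOf_mul_le j.succ (C (θ j') : MvPolynomial (Fin (n+1)) ℝ) (X 0)
        simp [MvPolynomial.degreeOf_X, (Fin.succ_ne_zero j), degreeOf_C] at this
        omega
      rw [hC]
      rcases eq_or_ne j' j with h | h
      · subst h; simp [MvPolynomial.degreeOf_X]
      · have h1 : (j'.succ : Fin (n+1)) ≠ j.succ := fun hh => h (Fin.succ_injective n hh)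
        have h2 : (j'.castSucc : Fin (n+1)) ≠ j.castSucc :=
          fun hh => h (Fin.castSucc_injective n hh)
        simp [MvPolynomial.degreeOf_X, h1, h2, Ne.symm h]
  conv_lhs => rw [P.as_sum]
  rw [map_sum]
  refine le_trans (degreeOf_sum_le _ _ _) ?_
  rw [Finset.sup_le_iff]
  intro d hd
  rw [aeval_monomial]
  refine le_trans (degreeOf_mul_le _ _ _) ?_
  have h0 : degreeOf j.succ (algebraMap ℝ (MvPolynomial (Fin (n+1)) ℝ) (coeff d P)) = 0 :=
    degreeOf_C _ _
  rw [h0, zero_add]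
  have hbd : degreeOf j.succ (d.prod fun i k => fv n θ i ^ k) ≤ d j.castSucc := by
    rw [Finsupp.prod]
    refine le_trans (degreeOf_prod_le _ _ _) ?_
    refine le_trans (Finset.sum_le_sum (g := fun i => if i = j.castSucc then d i else 0)
      (fun i _ => ?_)) ?_
    · calc degreeOf j.succ (fv n θ i ^ d i) ≤ d i * degreeOf j.succ (fv n θ i) :=
            degreeOf_pow_le _ _ _
        _ ≤ d i * (if i = j.castSucc then 1 else 0) := Nat.mul_le_mul_left _ (hdf i)
        _ = if i = j.castSucc then d i else 0 := by split <;> simp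
    · rw [Finset.sum_ite_eq' d.support j.castSucc d]
      split <;> simp
  refine le_trans hbd ?_
  rw [degreeOf_eq_sup]
  exact Finset.le_sup (f := fun d => d j.castSucc) hd

theorem exp_aux (n : ℕ) (Q : MvPolynomial (Fin (n+1)) ℝ) (y : Fin n → ℝ) (z : ℝ) :
    eval (Fin.cons z y : Fin (n+1) → ℝ) Q
      = ∑ k ∈ Finset.range ((finSuccEquiv ℝ n Q).natDegree + 1),
          eval y ((finSuccEquiv ℝ n Q).coeff k) * z ^ k := by
  rw [eval_eq_eval_mv_eval']
  have hn : (Polynomial.map (eval y) (MvPolynomial.finSuccEquiv ℝ n Q)).natDegree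
      < (MvPolynomial.finSuccEquiv ℝ n Q).natDegree + 1 :=
    lt_of_le_of_lt Polynomial.natDegree_map_le (Nat.lt_succ_self _)
  rw [Polynomial.eval_eq_sum_range' hn]
  simp [Polynomial.coeff_map]

end CharAux

theorem characterization_of_composed_polynomials (n m : ℕ)
    (θ : Fin n → ℝ) (hθ : ∀ j, θ j ≠ 0)
    (P : MvPolynomial (Fin (n + 1)) ℝ) (hdeg : ∀ i, P.degreeOf i ≤ m)
    (W : Set (Fin n → ℝ))
    (hW : ∀ g : (Fin n → ℝ) → ℝ, ∃! Q : MvPolynomial (Fin n) ℝ,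
      (∀ i, Q.degreeOf i ≤ n * m) ∧ ∀ w ∈ W, MvPolynomial.eval w Q = g w)
    (hseq : ∀ α ∈ W, ∃ u : ℕ → (Fin (n + 1) → ℝ),
      (∀ j : Fin n,
        Tendsto (fun N => u N j.castSucc + θ j * u N (Fin.last n)) atTop (nhds (α j))) ∧
      Tendsto (fun N => |u N (Fin.last n)|) atTop atTop ∧
      ∃ C : ℝ, ∀ N, |MvPolynomial.eval (u N) P| ≤ C) :
    ∃ A₀ : MvPolynomial (Fin n) ℝ, (∀ i, A₀.degreeOf i ≤ n * m) ∧
      ∀ t : Fin (n + 1) → ℝ,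
        MvPolynomial.eval t P =
          MvPolynomial.eval (fun j : Fin n => t j.castSucc + θ j * t (Fin.last n)) A₀ := by
  classical
  open MvPolynomial in
  set Q : MvPolynomial (Fin (n+1)) ℝ := MvPolynomial.aeval (CharAux.fv n θ) P with hQdef
  set p : Polynomial (MvPolynomial (Fin n) ℝ) := MvPolynomial.finSuccEquiv ℝ n Q with hp
  set c : ℕ → MvPolynomial (Fin n) ℝ := fun k => p.coeff k with hc
  set D : ℕ := p.natDegree with hD
  have hdegc : ∀ k (i : Fin n), MvPolynomial.degreeOf i (c k) ≤ n * m := by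
    intro k i
    have h1 : MvPolynomial.degreeOf i (c k) ≤ MvPolynomial.degreeOf i.succ Q :=
      MvPolynomial.degreeOf_coeff_finSuccEquiv Q i k
    have h2 : MvPolynomial.degreeOf i.succ Q ≤ MvPolynomial.degreeOf i.castSucc P :=
      CharAux.deg_aux n θ P i
    have h3 : m ≤ n * m := Nat.le_mul_of_pos_left m i.pos
    exact le_trans h1 (le_trans h2 (le_trans (hdeg i.castSucc) h3))
  have hexp : ∀ (y : Fin n → ℝ) (z : ℝ),
      MvPolynomial.eval (Fin.cons z y : Fin (n+1) → ℝ) Q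
        = ∑ k ∈ Finset.range (D + 1), MvPolynomial.eval y (c k) * z ^ k := by
    intro y z
    rw [CharAux.exp_aux n Q y z, ← hp]
  have hvanish : ∀ k, 1 ≤ k → c k = 0 := by
    have key : ∀ r k, D < k + r → 1 ≤ k → c k = 0 := by
      intro r
      induction r with
      | zero =>
        intro k hk _
        exact Polynomial.coeff_eq_zero_of_natDegree_lt (by omega)
      | succ r ih =>
        intro k hk hk1
        by_cases hcase : D < k + r
        · exact ih k hcase hk1
        have hvan : ∀ α ∈ W, MvPolynomial.eval α (c k) = 0 := by
          intro α hα
          obtain ⟨u, hu1, hu2, C0, hC0⟩ := hseq α hα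
          set yN : ℕ → Fin n → ℝ := fun N j => u N j.castSucc + θ j * u N (Fin.last n)
            with hyNdef
          set zN : ℕ → ℝ := fun N => u N (Fin.last n) with hzNdef
          have heval : ∀ N, MvPolynomial.eval (u N) P
              = ∑ l ∈ Finset.range (k+1), MvPolynomial.eval (yN N) (c l) * zN N ^ l := by
            intro N
            rw [CharAux.eval_aux n θ P (u N), ← hQdef,
              hexp (fun j => u N j.castSucc + θ j * u N (Fin.last n)) (u N (Fin.last n))]
            symm
            refine Finset.sum_subset (Finset.range_subset_range.2 (by omega)) ?_
            intro l hl hl'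
            simp only [Finset.mem_range, not_lt] at hl hl'
            rw [ih l (by omega) (by omega)]
            simp
          have hyN : Tendsto yN atTop (nhds α) := tendsto_pi_nhds.mpr hu1
          have hcont : ∀ q : MvPolynomial (Fin n) ℝ,
              Tendsto (fun N => MvPolynomial.eval (yN N) q) atTop
                (nhds (MvPolynomial.eval α q)) :=
            fun q => ((MvPolynomial.continuous_eval (p := q)).tendsto α).comp hyN
          have hf0 : Tendsto (fun N => MvPolynomial.eval (u N) P / zN N ^ k) atTop
              (nhds 0) := by
            have hzk : Tendsto (fun N => |zN N| ^ k) atTop atTop :=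
              (tendsto_pow_atTop (by omega)).comp hu2
            refine squeeze_zero_norm (fun N => ?_)
              (tendsto_const_nhds.div_atTop hzk : Tendsto (fun N => C0 / |zN N| ^ k) atTop (nhds 0))
            rw [Real.norm_eq_abs, abs_div, abs_pow]
            rcases eq_or_lt_of_le (abs_nonneg (zN N)) with hz | hz
            · have hzz : |zN N| ^ k = 0 := by rw [← hz]; exact zero_pow (by omega)
              rw [hzz, div_zero, div_zero]
            · exact (div_le_div_iff_of_pos_right (pow_pos hz k)).mpr (hC0 N)
          have hev1 : ∀ᶠ N in atTop, (1:ℝ) ≤ |zN N| := hu2.eventually_ge_atTop 1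
          have hzpow : ∀ l, l ≤ k → Tendsto (fun N => zN N ^ l / zN N ^ k) atTop
              (nhds (if l = k then 1 else 0)) := by
            intro l hl
            rcases eq_or_ne l k with h | h
            · subst h
              simp only [if_pos rfl]
              refine Tendsto.congr' ?_ tendsto_const_nhds
              filter_upwards [hev1] with N hN
              have hz : zN N ≠ 0 := by
                intro h0; rw [h0] at hN; simp at hN; linarith
              rw [div_self (pow_ne_zero _ hz)]
              simp
            · have hlk : l < k := lt_of_le_of_ne hl h
              simp only [if_neg h]
              refine squeeze_zero_norm' ?_
                (tendsto_const_nhds.div_atTop hu2 :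
                  Tendsto (fun N => (1:ℝ) / |zN N|) atTop (nhds 0))
              filter_upwards [hev1] with N hN
              have hzpos : (0:ℝ) < |zN N| := lt_of_lt_of_le one_pos hN
              rw [Real.norm_eq_abs, abs_div, abs_pow, abs_pow]
              have h1 : |zN N| ^ l ≤ |zN N| ^ (k-1) :=
                pow_le_pow_right₀ hN (by omega)
              have h2 : |zN N| ^ (k-1) / |zN N| ^ k = 1 / |zN N| := by
                have : |zN N| ^ k = |zN N| ^ (k-1) * |zN N| := by
                  rw [← pow_succ]
                  congr 1
                  omega
                rw [this, div_mul_eq_div_div, div_self (by positivity)]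
              calc |zN N| ^ l / |zN N| ^ k ≤ |zN N| ^ (k-1) / |zN N| ^ k :=
                    (div_le_div_iff_of_pos_right (by positivity)).mpr h1
                _ = 1 / |zN N| := h2
          have hfK : Tendsto (fun N => MvPolynomial.eval (u N) P / zN N ^ k) atTop
              (nhds (MvPolynomial.eval α (c k))) := by
            have hfG : ∀ N, MvPolynomial.eval (u N) P / zN N ^ k
                = ∑ l ∈ Finset.range (k+1),
                    MvPolynomial.eval (yN N) (c l) * (zN N ^ l / zN N ^ k) := by
              intro N
              rw [heval N, Finset.sum_div]
              exact Finset.sum_congr rfl (fun l _ => mul_div_assoc _ _ _)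
            simp only [hfG]
            have hsum : Tendsto (fun N => ∑ l ∈ Finset.range (k+1),
                MvPolynomial.eval (yN N) (c l) * (zN N ^ l / zN N ^ k)) atTop
                (nhds (∑ l ∈ Finset.range (k+1),
                  MvPolynomial.eval α (c l) * (if l = k then 1 else 0))) := by
              refine tendsto_finset_sum _ (fun l hl => ?_)
              exact (hcont (c l)).mul (hzpow l (by simp at hl; omega))
            have hsum2 : (∑ l ∈ Finset.range (k+1),
                MvPolynomial.eval α (c l) * (if l = k then 1 else 0))
                = MvPolynomial.eval α (c k) := by
              simp only [mul_ite, mul_one, mul_zero]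
              rw [Finset.sum_ite_eq' (Finset.range (k+1)) k
                (fun l => MvPolynomial.eval α (c l))]
              simp
            rwa [hsum2] at hsum
          exact tendsto_nhds_unique hfK hf0
        obtain ⟨Z, hZ, huniq⟩ := hW (fun _ => 0)
        have h1 := huniq (c k) ⟨fun i => hdegc k i, fun w hw => hvan w hw⟩
        have h2 := huniq 0 ⟨fun i => by simp [MvPolynomial.degreeOf_zero], fun w hw => by simp⟩
        exact h1.trans h2.symm
    exact fun k hk => key (D+1) k (by omega) hk
  refine ⟨c 0, fun i => hdegc 0 i, fun t => ?_⟩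
  rw [CharAux.eval_aux n θ P t, ← hQdef,
    hexp (fun j => t j.castSucc + θ j * t (Fin.last n)) (t (Fin.last n))]
  rw [Finset.sum_eq_single 0]
  · simp
  · intro l _ hl0
    rw [hvanish l (by omega)]
    simp
  · intro h
    simp at h
end
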